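/- For every bipartite state ρ on ℂ^m ⊗ ℂ^n, the two-sided negativity of quantumness equals the minimal l1-distance (in the optimal product basis) from the classical-classical states: Q_N^{AB}(ρ) = inf over m×m unitaries U, n×n unitaries V, and diagonal states D indexed by Fin m × Fin n (nonnegative diagonal entries summing to 1, zero off-diagonal entries) of (1/2)‖(U ⊗ V)† ρ (U ⊗ V) − D‖_{l1}. -/

import Mathlib

open scoped Kronecker ComplexOrder
open Matrix

noncomputable def traceNorm {ι : Type*} [Fintype ι] [DecidableEq ι] (A : Matrix ι ι ℂ) : ℝ :=
  ((((Matrix.posSemidef_conjTranspose_mul_self A).1.eigenvectorUnitary : Matrix ι ι ℂ) *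
    Matrix.diagonal (((↑) : ℝ → ℂ) ∘ (√·) ∘ (Matrix.posSemidef_conjTranspose_mul_self A).1.eigenvalues) *
    (star (Matrix.posSemidef_conjTranspose_mul_self A).1.eigenvectorUnitary :
      Matrix ι ι ℂ)).trace).re

noncomputable def l1Norm {ι κ : Type*} [Fintype ι] [Fintype κ] (A : Matrix ι κ ℂ) : ℝ :=
  ∑ i, ∑ j, ‖A i j‖

def ptranspose {α β : Type*} (ρ : Matrix (α × β) (α × β) ℂ) : Matrix (α × β) (α × β) ℂ :=
  Matrix.of fun p q => ρ (p.1, q.2) (q.1, p.2)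

noncomputable def negativity {α β : Type*} [Fintype α] [Fintype β] [DecidableEq α] [DecidableEq β]
    (ρ : Matrix (α × β) (α × β) ℂ) : ℝ :=
  (traceNorm (ptranspose ρ) - 1) / 2

def matUnit {ι : Type*} [DecidableEq ι] (i j : ι) : Matrix ι ι ℂ :=
  Matrix.single i j 1

noncomputable def mcs {n : ℕ} (t : Fin n → Fin n → ℂ) :
    Matrix (Fin n × Fin n) (Fin n × Fin n) ℂ :=
  ∑ i, ∑ j, t i j • (matUnit i j ⊗ₖ matUnit i j)

def blockOf {m n : ℕ} (ρ : Matrix (Fin m × Fin n) (Fin m × Fin n) ℂ) (i j : Fin m) :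
    Matrix (Fin n) (Fin n) ℂ :=
  Matrix.of fun k l => ρ (i, k) (j, l)

noncomputable def conjU {m n : ℕ} (U : Matrix.unitaryGroup (Fin m) ℂ)
    (ρ : Matrix (Fin m × Fin n) (Fin m × Fin n) ℂ) : Matrix (Fin m × Fin n) (Fin m × Fin n) ℂ :=
  ((U : Matrix (Fin m) (Fin m) ℂ) ⊗ₖ (1 : Matrix (Fin n) (Fin n) ℂ))ᴴ * ρ *
    ((U : Matrix (Fin m) (Fin m) ℂ) ⊗ₖ (1 : Matrix (Fin n) (Fin n) ℂ))

noncomputable def conjUV {m n : ℕ} (U : Matrix.unitaryGroup (Fin m) ℂ)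
    (V : Matrix.unitaryGroup (Fin n) ℂ)
    (ρ : Matrix (Fin m × Fin n) (Fin m × Fin n) ℂ) : Matrix (Fin m × Fin n) (Fin m × Fin n) ℂ :=
  ((U : Matrix (Fin m) (Fin m) ℂ) ⊗ₖ (V : Matrix (Fin n) (Fin n) ℂ))ᴴ * ρ *
    ((U : Matrix (Fin m) (Fin m) ℂ) ⊗ₖ (V : Matrix (Fin n) (Fin n) ℂ))

noncomputable def QNA {m n : ℕ} (ρ : Matrix (Fin m × Fin n) (Fin m × Fin n) ℂ) : ℝ :=
  ⨅ U : Matrix.unitaryGroup (Fin m) ℂ,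
    ((∑ i, ∑ j, traceNorm (blockOf (conjU U ρ) i j)) - 1) / 2

noncomputable def QNAB {m n : ℕ} (ρ : Matrix (Fin m × Fin n) (Fin m × Fin n) ℂ) : ℝ :=
  ⨅ U : Matrix.unitaryGroup (Fin m) ℂ, ⨅ V : Matrix.unitaryGroup (Fin n) ℂ,
    (l1Norm (conjUV U V ρ) - 1) / 2


/-!
Fix the rotated state σ = (U ⊗ V)† ρ (U ⊗ V), again positive semidefinite of trace one. For any
diagonal state D, the triangle inequality and ‖D‖_{l1} = 1 give ‖σ - D‖_{l1} ≥ ‖σ‖_{l1} - 1.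
Equality holds for D = diag σ, which is a diagonal state because the diagonal of σ is nonnegative
with sum tr σ = 1: subtracting it removes exactly the diagonal entries from the l1 sum.
-/

section l1Norm

variable {ι : Type*} [Fintype ι]

lemma l1Norm_nonneg {κ : Type*} [Fintype κ] (A : Matrix ι κ ℂ) : 0 ≤ l1Norm A := by
  unfold l1Norm
  positivity

lemma l1Norm_le_l1Norm_sub_add {κ : Type*} [Fintype κ] (A B : Matrix ι κ ℂ) :
    l1Norm A ≤ l1Norm (A - B) + l1Norm B := by
  simp only [l1Norm, ← Finset.sum_add_distrib]
  gcongr with i _ j _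
  simpa using norm_add_le (A i j - B i j) (B i j)

variable [DecidableEq ι]

lemma l1Norm_diagonal (d : ι → ℂ) : l1Norm (diagonal d) = ∑ i, ‖d i‖ := by
  refine Finset.sum_congr rfl fun i _ => ?_
  rw [Finset.sum_eq_single i (fun j _ hj => by simp [diagonal_apply_ne _ hj.symm]) (by simp)]
  simp

lemma l1Norm_sub_diagonal_diag (A : Matrix ι ι ℂ) :
    l1Norm (A - diagonal A.diag) = l1Norm A - ∑ i, ‖A i i‖ := by
  rw [eq_sub_iff_add_eq, l1Norm, l1Norm, ← Finset.sum_add_distrib]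
  refine Finset.sum_congr rfl fun i _ => ?_
  rw [← Finset.add_sum_erase _ _ (Finset.mem_univ i), ← Finset.add_sum_erase _ _ (Finset.mem_univ i)]
  have hoff : ∀ j ∈ Finset.univ.erase i, ‖(A - diagonal A.diag) i j‖ = ‖A i j‖ := fun j hj => by
    simp [diagonal_apply_ne _ (Finset.ne_of_mem_erase hj).symm]
  rw [Finset.sum_congr rfl hoff]
  simp

end l1Norm

lemma Matrix.PosSemidef.ofReal_norm_diag {ι : Type*} [Fintype ι] {A : Matrix ι ι ℂ}
    (hA : A.PosSemidef) (i : ι) : ((‖A i i‖ : ℝ) : ℂ) = A i i :=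
  (Complex.eq_coe_norm_of_nonneg hA.diag_nonneg).symm

lemma Matrix.PosSemidef.sum_norm_diag {ι : Type*} [Fintype ι] {A : Matrix ι ι ℂ}
    (hA : A.PosSemidef) (htr : A.trace = 1) : ∑ i, ‖A i i‖ = 1 := by
  exact_mod_cast (by simp_rw [Complex.ofReal_sum, hA.ofReal_norm_diag]; exact htr :
    ((∑ i, ‖A i i‖ : ℝ) : ℂ) = 1)

section conjUV

variable {m n : ℕ} (U : unitaryGroup (Fin m) ℂ) (V : unitaryGroup (Fin n) ℂ)

lemma conjUV_posSemidef {ρ : Matrix (Fin m × Fin n) (Fin m × Fin n) ℂ} (hρ : ρ.PosSemidef) : (conjUV U V ρ).PosSemidef :=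
  hρ.conjTranspose_mul_mul_same _

lemma trace_conjUV (ρ : Matrix (Fin m × Fin n) (Fin m × Fin n) ℂ) :
    (conjUV U V ρ).trace = ρ.trace := by
  have hW := (kronecker_mem_unitary U.2 V.2).2
  rw [conjUV, trace_mul_cycle, ← star_eq_conjTranspose, hW, Matrix.one_mul]

end conjUV

lemma l1Norm_sub_one_le_l1Norm_sub_diagonal {ι : Type*} [Fintype ι] [DecidableEq ι]
    (σ : Matrix ι ι ℂ) {d : ι → ℝ} (hd0 : ∀ i, 0 ≤ d i) (hd1 : ∑ i, d i = 1) :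
    l1Norm σ - 1 ≤ l1Norm (σ - diagonal fun i => (d i : ℂ)) := by
  have hD : l1Norm (diagonal fun i => (d i : ℂ)) = 1 := by
    simp_rw [l1Norm_diagonal, Complex.norm_of_nonneg (hd0 _), hd1]
  linarith [l1Norm_le_l1Norm_sub_add σ (diagonal fun i => (d i : ℂ))]

lemma l1Norm_sub_diagonal_norm_diag {ι : Type*} [Fintype ι] [DecidableEq ι] {σ : Matrix ι ι ℂ}
    (hσ : σ.PosSemidef) (htr : σ.trace = 1) :
    l1Norm (σ - diagonal fun i => ((‖σ i i‖ : ℝ) : ℂ)) = l1Norm σ - 1 := by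
  simp_rw [hσ.ofReal_norm_diag]
  rw [← hσ.sum_norm_diag htr]
  exact l1Norm_sub_diagonal_diag σ

/-- the two-sided negativity of quantumness equals the minimal l1-distance
(in the optimal product basis) from the classical-classical (diagonal) states. -/
theorem stmt_9 {m n : ℕ} (ρ : Matrix (Fin m × Fin n) (Fin m × Fin n) ℂ)
    (hpos : ρ.PosSemidef) (htr : ρ.trace = 1) :
    QNAB ρ = sInf { r : ℝ | ∃ (U : Matrix.unitaryGroup (Fin m) ℂ)
        (V : Matrix.unitaryGroup (Fin n) ℂ) (d : Fin m × Fin n → ℝ),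
        (∀ p, 0 ≤ d p) ∧ (∑ p, d p = 1) ∧
        r = (1/2) * l1Norm (conjUV U V ρ - Matrix.diagonal (fun p => (d p : ℂ))) } := by
  set f : unitaryGroup (Fin m) ℂ × unitaryGroup (Fin n) ℂ → ℝ :=
    fun UV => (l1Norm (conjUV UV.1 UV.2 ρ) - 1) / 2
  have hf_bdd : BddBelow (Set.range f) :=
    ⟨-(1 / 2), by rintro _ ⟨⟨U, V⟩, rfl⟩; dsimp only [f]; linarith [l1Norm_nonneg (conjUV U V ρ)]⟩
  rw [QNAB, ← ciInf_prod hf_bdd]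
  refine csInf_eq_csInf_of_forall_exists_le ?_ ?_
  · rintro _ ⟨⟨U, V⟩, rfl⟩
    have hσ := conjUV_posSemidef U V hpos
    have htrσ : (conjUV U V ρ).trace = 1 := (trace_conjUV U V ρ).trans htr
    refine ⟨_, ⟨U, V, fun p => ‖conjUV U V ρ p p‖, fun _ => norm_nonneg _,
      hσ.sum_norm_diag htrσ, ?_⟩, le_rfl⟩
    rw [l1Norm_sub_diagonal_norm_diag hσ htrσ]
    ring
  · rintro _ ⟨U, V, d, hd0, hd1, rfl⟩
    refine ⟨f (U, V), ⟨_, rfl⟩, ?_⟩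
    dsimp only [f]
    linarith [l1Norm_sub_one_le_l1Norm_sub_diagonal (conjUV U V ρ) hd0 hd1]
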